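/- arXiv:0909.2416 — 6 statements merged into one kernel-verified Lean document; each statement's English description precedes it below -/
import Mathlib

section
/- If the minimum number of directed trees needed to span a weighted directed graph is n_2, then the algebraic multiplicity of the eigenvalue 0 of the normalized graph Laplacian L is at least n_2. -/
open Polynomial Matrix Finset

/-- If the minimum number of (rooted, directed) trees needed to span a
weighted directed graph is `n₂`, then the algebraic multiplicity of the
eigenvalue `0` of the normalized graph Laplacian `L` is at least `n₂`.
The minimum number of spanning trees is formalized as the least cardinality of
a set of roots such that every vertex is reachable from some root along the
directed edges `j → i` (present whenever `w_ij ≠ 0`). -/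
theorem laplacian_zero_multiplicity_ge_spanning_trees
    (n : ℕ) (W : Fin n → Fin n → ℝ)
    (hself : ∀ i, W i i = 0)
    (d : Fin n → ℝ) (hd : ∀ i, d i = ∑ j, W i j)
    (L : Matrix (Fin n) (Fin n) ℝ)
    (hL : ∀ i j, L i j =
      if i = j then (if d i ≠ 0 then 1 else 0)
      else (if d i ≠ 0 then -W i j / d i else 0))
    (n₂ : ℕ)
    (hn₂ : n₂ = sInf {k : ℕ | ∃ roots : Finset (Fin n), roots.card = k ∧
      ∀ i : Fin n, ∃ root ∈ roots,
        Relation.ReflTransGen (fun j i : Fin n => W i j ≠ 0) root i}) :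
    n₂ ≤ L.charpoly.rootMultiplicity 0 := by
  classical
  set rel : Fin n → Fin n → Prop := fun j i => W i j ≠ 0 with hrel
  set S : Set ℕ := {k : ℕ | ∃ roots : Finset (Fin n), roots.card = k ∧
      ∀ i : Fin n, ∃ root ∈ roots, Relation.ReflTransGen rel root i} with hS
  have hSne : S.Nonempty :=
    ⟨n, Finset.univ, by simp, fun i => ⟨i, Finset.mem_univ i, Relation.ReflTransGen.refl⟩⟩
  have hmem : n₂ ∈ S := hn₂ ▸ Nat.sInf_mem hSne
  have hle : ∀ k ∈ S, n₂ ≤ k := fun k hk => hn₂ ▸ Nat.sInf_le hk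
  obtain ⟨R, hRcard, hRcov⟩ := hmem
  -- ancestors of distinct roots are disjoint
  have key : ∀ r ∈ R, ∀ r' ∈ R, r ≠ r' → ∀ j, Relation.ReflTransGen rel j r →
      Relation.ReflTransGen rel j r' → False := by
    intro r hr r' hr' hne j hjr hjr'
    have h2 : 1 < R.card := Finset.one_lt_card.mpr ⟨r, hr, r', hr', hne⟩
    set R' : Finset (Fin n) := insert j ((R.erase r).erase r') with hR'
    have hcov' : ∀ i : Fin n, ∃ root ∈ R', Relation.ReflTransGen rel root i := by
      intro i
      obtain ⟨root, hroot, hri⟩ := hRcov i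
      by_cases e1 : root = r
      · exact ⟨j, Finset.mem_insert_self _ _, hjr.trans (e1 ▸ hri)⟩
      by_cases e2 : root = r'
      · exact ⟨j, Finset.mem_insert_self _ _, hjr'.trans (e2 ▸ hri)⟩
      · exact ⟨root, Finset.mem_insert_of_mem
          (Finset.mem_erase.mpr ⟨e2, Finset.mem_erase.mpr ⟨e1, hroot⟩⟩), hri⟩
    have hmem' : R'.card ∈ S := ⟨R', rfl, hcov'⟩
    have hcard2 : ((R.erase r).erase r').card = R.card - 2 := by
      rw [Finset.card_erase_of_mem (Finset.mem_erase.mpr ⟨Ne.symm hne, hr'⟩),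
        Finset.card_erase_of_mem hr]
      omega
    have hcard' : R'.card ≤ R.card - 1 := by
      have := Finset.card_insert_le j ((R.erase r).erase r')
      rw [← hR'] at this
      omega
    have := hle _ hmem'
    omega
  have huniq : ∀ i r r', r ∈ R → r' ∈ R → Relation.ReflTransGen rel i r →
      Relation.ReflTransGen rel i r' → r = r' := by
    intro i r r' hr hr' h h'
    by_contra hne
    exact key r hr r' hr' hne i h h'
  set b : Fin n → ℕ := fun i =>
    if h : ∃ r, r ∈ R ∧ Relation.ReflTransGen rel i r then h.choose.val + 1 else 0 with hb
  have hb_of : ∀ i r, r ∈ R → Relation.ReflTransGen rel i r → b i = r.val + 1 := by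
    intro i r hr hir
    have h : ∃ r, r ∈ R ∧ Relation.ReflTransGen rel i r := ⟨r, hr, hir⟩
    have hspec := h.choose_spec
    simp only [hb, dif_pos h]
    rw [huniq i h.choose r hspec.1 hr hspec.2 hir]
  have hb_root : ∀ r ∈ R, b r = r.val + 1 := fun r hr =>
    hb_of r r hr Relation.ReflTransGen.refl
  have hbpos : ∀ i, b i ≠ 0 → ∃ r, r ∈ R ∧ Relation.ReflTransGen rel i r := by
    intro i h0
    by_contra hc
    simp only [hb, dif_neg hc] at h0
    exact h0 rfl
  -- row support: rows of a block vanish outside that block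
  have hsupp : ∀ i j, b i ≠ 0 → b i ≠ b j → L i j = 0 := by
    intro i j h0 hne
    obtain ⟨r, hr, hir⟩ := hbpos i h0
    have hij : i ≠ j := fun h => hne (by rw [h])
    have hW : W i j = 0 := by
      by_contra hW
      have hjr : Relation.ReflTransGen rel j r := Relation.ReflTransGen.head hW hir
      exact hne ((hb_of i r hr hir).trans (hb_of j r hr hjr).symm)
    rw [hL i j, if_neg hij]
    split <;> simp [hW]
  -- row sums of L vanish
  have hrow : ∀ i, ∑ j, L i j = 0 := by
    intro i
    by_cases hdi : d i = 0
    · have : ∀ j, L i j = 0 := by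
        intro j; rw [hL i j]; simp [hdi]
      simp [this]
    · have hsplit : ∀ j, L i j = (if i = j then (1:ℝ) else 0) + (-W i j / d i) := by
        intro j
        rw [hL i j]
        by_cases h : i = j
        · subst h; simp [hdi, hself i]
        · simp [h, hdi]
      rw [Finset.sum_congr rfl fun j _ => hsplit j, Finset.sum_add_distrib]
      have h1 : ∑ j, (if i = j then (1:ℝ) else 0) = 1 := by simp
      have h2 : ∑ j, -W i j / d i = -1 := by
        rw [← Finset.sum_div]
        rw [show ∑ j, -W i j = -(d i) by rw [hd i, ← Finset.sum_neg_distrib]]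
        rw [neg_div, div_self hdi]
      rw [h1, h2]; ring
  -- block triangularity of the characteristic matrix
  have hBT : (charmatrix L).BlockTriangular b := by
    intro i j hlt
    have h0 : b i ≠ 0 := by omega
    have hne : b i ≠ b j := by omega
    have hij : i ≠ j := fun h => hne (by rw [h])
    rw [charmatrix_apply_ne _ _ _ hij, hsupp i j h0 hne, map_zero, neg_zero]
  have hdet := hBT.det
  -- each root block contributes a factor of X
  have hXdvd : ∀ r ∈ R, (X : ℝ[X]) ∣ ((charmatrix L).toSquareBlock b (b r)).det := by
    intro r hr
    rw [Polynomial.X_dvd_iff, Polynomial.coeff_zero_eq_eval_zero]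
    have hmapdet : Polynomial.eval 0 ((charmatrix L).toSquareBlock b (b r)).det =
        (((charmatrix L).toSquareBlock b (b r)).map (Polynomial.evalRingHom (0:ℝ))).det := by
      exact ((Polynomial.evalRingHom (0:ℝ)).map_det _)
    rw [hmapdet]
    rw [← Matrix.exists_mulVec_eq_zero_iff]
    refine ⟨fun _ => 1, ?_, ?_⟩
    · intro h
      have := congrFun h ⟨r, rfl⟩
      simp at this
    · funext i
      have hbi : b (i : Fin n) = b r := i.2
      have h0 : b (i : Fin n) ≠ 0 := by rw [hbi, hb_root r hr]; omega
      have hentry : ∀ j : {a // b a = b r},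
          (((charmatrix L).toSquareBlock b (b r)).map (Polynomial.evalRingHom (0:ℝ))) i j
            = -(L i j) := by
        intro j
        simp only [Matrix.map_apply, Matrix.toSquareBlock_def]
        by_cases h : (i : Fin n) = (j : Fin n)
        · rw [show ((of fun i j : {a // b a = b r} => charmatrix L i j) i j) =
            charmatrix L i j from rfl, h, charmatrix_apply_eq]
          simp
        · rw [show ((of fun i j : {a // b a = b r} => charmatrix L i j) i j) =
            charmatrix L i j from rfl, charmatrix_apply_ne _ _ _ h]
          simp
      simp only [Matrix.mulVec, dotProduct, mul_one, Pi.zero_apply]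
      rw [Finset.sum_congr rfl fun j _ => hentry j]
      have hsub : ∑ j ∈ Finset.univ.filter (fun a => b a = b r), -(L (i : Fin n) j)
          = ∑ j : {a // b a = b r}, -(L (i : Fin n) (j : Fin n)) :=
        Finset.sum_subtype _ (by intro x; simp) _
      rw [← hsub]
      have hext : ∑ j ∈ Finset.univ.filter (fun a => b a = b r), -(L i j)
          = ∑ j, -(L i j) := by
        apply Finset.sum_subset (Finset.filter_subset _ _)
        intro j _ hj
        simp only [Finset.mem_filter, Finset.mem_univ, true_and] at hj
        rw [hsupp i j h0 (by rw [hbi]; exact fun h => hj h.symm), neg_zero]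
      rw [hext, Finset.sum_neg_distrib, hrow i, neg_zero]
  -- assemble
  have hinj : Set.InjOn b R := by
    intro r hr r' hr' h
    rw [hb_root r hr, hb_root r' hr'] at h
    exact Fin.ext (by omega)
  have hcardim : (R.image b).card = n₂ := by
    rw [Finset.card_image_of_injOn hinj, hRcard]
  have hfinal : (X : ℝ[X]) ^ n₂ ∣ L.charpoly := by
    show _ ∣ (charmatrix L).det
    rw [hdet]
    calc (X : ℝ[X]) ^ n₂ = ∏ _a ∈ R.image b, (X : ℝ[X]) := by
          rw [Finset.prod_const, hcardim]
      _ ∣ ∏ a ∈ R.image b, ((charmatrix L).toSquareBlock b a).det := by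
          refine Finset.prod_dvd_prod_of_dvd _ _ ?_
          intro a ha
          obtain ⟨r, hr, rfl⟩ := Finset.mem_image.mp ha
          exact hXdvd r hr
      _ ∣ ∏ a ∈ Finset.univ.image b, ((charmatrix L).toSquareBlock b a).det :=
          Finset.prod_dvd_prod_of_subset _ _ _
            (Finset.image_subset_image (Finset.subset_univ R))
  have hne0 : L.charpoly ≠ 0 := (Matrix.charpoly_monic L).ne_zero
  rw [Polynomial.le_rootMultiplicity_iff hne0]
  simpa using hfinal
end

section
/- Consider the triangular linear time-varying system v_1(t+1) = k_1(t) v_1(t) and v_i(t+1) = k_1(t) v_i(t) + k_2(t) v_{i-1}(t) for i = 2,…,m, where k_1, k_2 : ℕ → ℝ are bounded, k_1(t) ≠ 0 for all t ≥ t̄, and η := limsup_{T→∞} (1/T) sup_{t_0 ≥ t̄} Σ_{s=t_0}^{t_0+T-1} log|k_1(s)| < 0. Then for every ε ∈ (0, -η) there exists K_ε ≥ 0 such that for all t ≥ t_0 ≥ t̄ and all initial data, ‖(v_1(t),…,v_m(t))‖ ≤ K_ε e^{(η+ε)(t-t_0)} ‖(v_1(t_0),…,v_m(t_0))‖. -/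
set_option maxHeartbeats 1000000
open Finset Filter Real

private lemma voc_aux {m : ℕ} (k1 : ℕ → ℝ) (g : Fin m → ℕ → ℝ) (v : ℕ → Fin m → ℝ)
    (hv : ∀ t i, v (t + 1) i = k1 t * v t i + g i t) (t0 : ℕ) (i : Fin m) :
    ∀ t, t0 ≤ t → |v t i| ≤ (∏ u ∈ Finset.Ico t0 t, |k1 u|) * |v t0 i| +
      ∑ s ∈ Finset.Ico t0 t, (∏ u ∈ Finset.Ico (s + 1) t, |k1 u|) * |g i s| := by
  intro t ht
  induction t, ht using Nat.le_induction with
  | base => simp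
  | succ t ht ih =>
    have h1 : |v (t + 1) i| ≤ |k1 t| * |v t i| + |g i t| := by
      rw [hv t i]
      calc |k1 t * v t i + g i t| ≤ |k1 t * v t i| + |g i t| := abs_add_le _ _
        _ = |k1 t| * |v t i| + |g i t| := by rw [abs_mul]
    have h2 : |k1 t| * |v t i| ≤ |k1 t| * ((∏ u ∈ Finset.Ico t0 t, |k1 u|) * |v t0 i| +
        ∑ s ∈ Finset.Ico t0 t, (∏ u ∈ Finset.Ico (s + 1) t, |k1 u|) * |g i s|) :=
      mul_le_mul_of_nonneg_left ih (abs_nonneg _)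
    have hprod : ∏ u ∈ Finset.Ico t0 (t + 1), |k1 u| =
        (∏ u ∈ Finset.Ico t0 t, |k1 u|) * |k1 t| := Finset.prod_Ico_succ_top ht _
    have hsum : ∑ s ∈ Finset.Ico t0 (t + 1), (∏ u ∈ Finset.Ico (s + 1) (t + 1), |k1 u|) * |g i s|
        = (∑ s ∈ Finset.Ico t0 t, ((∏ u ∈ Finset.Ico (s + 1) t, |k1 u|) * |k1 t|) * |g i s|)
          + |g i t| := by
      rw [Finset.sum_Ico_succ_top ht]
      have : ∀ s ∈ Finset.Ico t0 t, (∏ u ∈ Finset.Ico (s + 1) (t + 1), |k1 u|) * |g i s|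
          = ((∏ u ∈ Finset.Ico (s + 1) t, |k1 u|) * |k1 t|) * |g i s| := by
        intro s hs
        rw [Finset.prod_Ico_succ_top (Finset.mem_Ico.mp hs).2]
      rw [Finset.sum_congr rfl this]
      simp
    calc |v (t + 1) i| ≤ |k1 t| * |v t i| + |g i t| := h1
      _ ≤ |k1 t| * ((∏ u ∈ Finset.Ico t0 t, |k1 u|) * |v t0 i| +
            ∑ s ∈ Finset.Ico t0 t, (∏ u ∈ Finset.Ico (s + 1) t, |k1 u|) * |g i s|) + |g i t| := by
          linarith
      _ = (∏ u ∈ Finset.Ico t0 (t + 1), |k1 u|) * |v t0 i| +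
          ∑ s ∈ Finset.Ico t0 (t + 1), (∏ u ∈ Finset.Ico (s + 1) (t + 1), |k1 u|) * |g i s| := by
          rw [hprod, hsum, mul_add, Finset.mul_sum]
          have hc : ∑ s ∈ Finset.Ico t0 t, |k1 t| * ((∏ u ∈ Finset.Ico (s + 1) t, |k1 u|) * |g i s|)
              = ∑ s ∈ Finset.Ico t0 t, (∏ u ∈ Finset.Ico (s + 1) t, |k1 u|) * |k1 t| * |g i s| :=
            Finset.sum_congr rfl fun s _ => by ring
          rw [hc]; ring

private lemma poly_le_exp (p : ℕ) (δ : ℝ) (hδ : 0 < δ) (x : ℝ) (hx : 0 ≤ x) :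
    (x + 1) ^ p ≤ (p.factorial * Real.exp δ / δ ^ p) * Real.exp (δ * x) := by
  have hz : 0 ≤ δ * (x + 1) := by positivity
  have h1 := Real.pow_div_factorial_le_exp (x := δ * (x + 1)) hz p
  have hfac : (0:ℝ) < p.factorial := by exact_mod_cast p.factorial_pos
  have h2 : (δ * (x + 1)) ^ p ≤ p.factorial * Real.exp (δ * (x + 1)) := by
    rw [div_le_iff₀ hfac] at h1; linarith [h1]
  have h3 : δ ^ p * (x + 1) ^ p ≤ p.factorial * (Real.exp δ * Real.exp (δ * x)) := by
    calc δ ^ p * (x + 1) ^ p = (δ * (x + 1)) ^ p := (mul_pow _ _ _).symm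
      _ ≤ p.factorial * Real.exp (δ * (x + 1)) := h2
      _ = p.factorial * (Real.exp δ * Real.exp (δ * x)) := by
          rw [← Real.exp_add]; ring_nf
  have hδp : (0:ℝ) < δ ^ p := pow_pos hδ p
  rw [div_mul_eq_mul_div, le_div_iff₀ hδp]
  calc (x + 1) ^ p * δ ^ p = δ ^ p * (x + 1) ^ p := by ring
    _ ≤ p.factorial * (Real.exp δ * Real.exp (δ * x)) := h3
    _ = ↑p.factorial * Real.exp δ * Real.exp (δ * x) := by ring

/-- Exponential decay for the triangular linear time-varying system
`v₁(t+1) = k₁(t) v₁(t)`, `vᵢ(t+1) = k₁(t) vᵢ(t) + k₂(t) v_{i-1}(t)` for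
`i = 2,…,m`, under boundedness of `k₁, k₂`, non-vanishing of `k₁` for
`t ≥ t̄`, and negativity of the uniform averaged exponent
`η = limsup_{T→∞} (1/T) sup_{t₀ ≥ t̄} ∑_{s=t₀}^{t₀+T-1} log |k₁(s)|`. -/
theorem triangular_system_exponential_decay
    (m : ℕ) (hm : 0 < m)
    (k1 k2 : ℕ → ℝ)
    (hk1bdd : ∃ M, ∀ t, |k1 t| ≤ M) (hk2bdd : ∃ M, ∀ t, |k2 t| ≤ M)
    (tbar : ℕ) (hk1ne : ∀ t, tbar ≤ t → k1 t ≠ 0)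
    (η : ℝ)
    (hη : η = Filter.limsup (fun T : ℕ =>
      (⨆ t0 : {t : ℕ // tbar ≤ t},
        ∑ s ∈ Finset.Ico (t0 : ℕ) ((t0 : ℕ) + T), Real.log |k1 s|) / T)
      Filter.atTop)
    (hηneg : η < 0) :
    ∀ ε ∈ Set.Ioo (0 : ℝ) (-η), ∃ K : ℝ, 0 ≤ K ∧
      ∀ v : ℕ → Fin m → ℝ,
        (∀ t, ∀ i : Fin m, v (t + 1) i = k1 t * v t i +
          (if (i : ℕ) = 0 then 0
           else k2 t * v t ⟨(i : ℕ) - 1, Nat.lt_of_le_of_lt (Nat.sub_le _ _) i.isLt⟩)) →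
        ∀ t0, tbar ≤ t0 → ∀ t, t0 ≤ t →
          ‖v t‖ ≤ K * Real.exp ((η + ε) * ((t : ℝ) - (t0 : ℝ))) * ‖v t0‖ := by
  obtain ⟨M1, hM1⟩ := hk1bdd
  obtain ⟨M2, hM2⟩ := hk2bdd
  set M : ℝ := max M1 (max M2 1) with hMdef
  have hMk1 : ∀ t, |k1 t| ≤ M := fun t => le_trans (hM1 t) (le_max_left _ _)
  have hMk2 : ∀ t, |k2 t| ≤ M :=
    fun t => le_trans (hM2 t) (le_trans (le_max_left _ _) (le_max_right _ _))
  have hM1le : (1:ℝ) ≤ M := le_trans (le_max_right _ _) (le_max_right _ _)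
  have hM0 : (0:ℝ) < M := lt_of_lt_of_le one_pos hM1le
  have hlogM : 0 ≤ Real.log M := Real.log_nonneg hM1le
  intro ε hε
  obtain ⟨hε0, hεη⟩ := hε
  have hδ0 : 0 < ε / 2 := by linarith
  set δ : ℝ := ε / 2 with hδdef
  set a : ℝ := η + δ with hadef
  haveI : Nonempty {t : ℕ // tbar ≤ t} := ⟨⟨tbar, le_refl _⟩⟩
  have hterm : ∀ s, tbar ≤ s → Real.log |k1 s| ≤ Real.log M := fun s hs =>
    (Real.log_le_log_iff (abs_pos.mpr (hk1ne s hs)) hM0).mpr (hMk1 s)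
  have hsumle : ∀ T : ℕ, ∀ t0 : {t : ℕ // tbar ≤ t},
      (∑ s ∈ Finset.Ico (t0:ℕ) ((t0:ℕ) + T), Real.log |k1 s|) ≤ T * Real.log M := by
    intro T t0
    calc ∑ s ∈ Finset.Ico (t0:ℕ) ((t0:ℕ) + T), Real.log |k1 s|
        ≤ ∑ _s ∈ Finset.Ico (t0:ℕ) ((t0:ℕ) + T), Real.log M :=
          Finset.sum_le_sum (fun s hs => hterm s (le_trans t0.2 (Finset.mem_Ico.mp hs).1))
      _ = T * Real.log M := by
          rw [Finset.sum_const, Nat.card_Ico, Nat.add_sub_cancel_left, nsmul_eq_mul]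
  have hbdA : ∀ T : ℕ, BddAbove (Set.range fun t0 : {t : ℕ // tbar ≤ t} =>
      ∑ s ∈ Finset.Ico (t0:ℕ) ((t0:ℕ) + T), Real.log |k1 s|) :=
    fun T => ⟨T * Real.log M, by rintro x ⟨t0, rfl⟩; exact hsumle T t0⟩
  have hfb : ∀ T : ℕ, (⨆ t0 : {t : ℕ // tbar ≤ t},
      ∑ s ∈ Finset.Ico (t0:ℕ) ((t0:ℕ) + T), Real.log |k1 s|) / T ≤ Real.log M := by
    intro T
    rcases Nat.eq_zero_or_pos T with h | h
    · subst h; simp only [Nat.cast_zero, div_zero]; exact hlogM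
    · have hT : (0:ℝ) < T := by exact_mod_cast h
      rw [div_le_iff₀ hT]
      calc (⨆ t0 : {t : ℕ // tbar ≤ t},
            ∑ s ∈ Finset.Ico (t0:ℕ) ((t0:ℕ) + T), Real.log |k1 s|)
          ≤ T * Real.log M := ciSup_le (hsumle T)
        _ = Real.log M * T := by ring
  have hbu : Filter.IsBoundedUnder (· ≤ ·) Filter.atTop (fun T : ℕ =>
      (⨆ t0 : {t : ℕ // tbar ≤ t},
        ∑ s ∈ Finset.Ico (t0 : ℕ) ((t0 : ℕ) + T), Real.log |k1 s|) / T) :=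
    Filter.isBoundedUnder_of ⟨Real.log M, hfb⟩
  have hlimsup : Filter.limsup (fun T : ℕ =>
      (⨆ t0 : {t : ℕ // tbar ≤ t},
        ∑ s ∈ Finset.Ico (t0 : ℕ) ((t0 : ℕ) + T), Real.log |k1 s|) / T) Filter.atTop < a := by
    rw [← hη, hadef]; linarith
  obtain ⟨N, hN⟩ := Filter.eventually_atTop.mp
    (Filter.eventually_lt_of_limsup_lt hlimsup hbu)
  set Tm : ℕ := max N 1 with hTmdef
  have hSa : ∀ T : ℕ, Tm ≤ T → ∀ t0, tbar ≤ t0 →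
      (∑ s ∈ Finset.Ico t0 (t0 + T), Real.log |k1 s|) ≤ a * T := by
    intro T hT t0 ht0
    have hT1 : 1 ≤ T := le_trans (le_max_right N 1) hT
    have hTpos : (0:ℝ) < T := by exact_mod_cast hT1
    have h1 : (⨆ t0 : {t : ℕ // tbar ≤ t},
        ∑ s ∈ Finset.Ico (t0 : ℕ) ((t0 : ℕ) + T), Real.log |k1 s|) / T < a :=
      hN T (le_trans (le_max_left N 1) hT)
    rw [div_lt_iff₀ hTpos] at h1
    have h2 : (∑ s ∈ Finset.Ico t0 (t0 + T), Real.log |k1 s|)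
        ≤ ⨆ t0 : {t : ℕ // tbar ≤ t},
            ∑ s ∈ Finset.Ico (t0 : ℕ) ((t0 : ℕ) + T), Real.log |k1 s| :=
      le_ciSup (hbdA T) ⟨t0, ht0⟩
    calc (∑ s ∈ Finset.Ico t0 (t0 + T), Real.log |k1 s|)
        ≤ _ := h2
      _ ≤ a * T := by linarith
  set C0 : ℝ := (Tm:ℝ) * (Real.log M + |a|) with hC0def
  have hC0nn : 0 ≤ C0 :=
    mul_nonneg (Nat.cast_nonneg _) (add_nonneg hlogM (abs_nonneg a))
  have hkey : ∀ t0, tbar ≤ t0 → ∀ t, t0 ≤ t →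
      (∑ s ∈ Finset.Ico t0 t, Real.log |k1 s|) ≤ a * ((t:ℝ) - t0) + C0 := by
    intro t0 ht0 t htt
    obtain ⟨T, rfl⟩ : ∃ T, t = t0 + T := ⟨t - t0, by omega⟩
    have hcast : ((t0 + T : ℕ):ℝ) - t0 = (T:ℝ) := by push_cast; ring
    rw [hcast]
    rcases le_or_gt Tm T with h | h
    · have := hSa T h t0 ht0; linarith
    · have h1 : (∑ s ∈ Finset.Ico t0 (t0 + T), Real.log |k1 s|) ≤ T * Real.log M :=
        hsumle T ⟨t0, ht0⟩
      have hTle : (T:ℝ) ≤ (Tm:ℝ) := by exact_mod_cast h.le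
      have hTnn : (0:ℝ) ≤ T := Nat.cast_nonneg T
      have hneg : -(|a|) ≤ a := neg_abs_le a
      have haT : -(|a| * Tm) ≤ a * T := by nlinarith [abs_nonneg a]
      have hTlog : (T:ℝ) * Real.log M ≤ (Tm:ℝ) * Real.log M :=
        mul_le_mul_of_nonneg_right hTle hlogM
      rw [hC0def]; nlinarith
  set C : ℝ := Real.exp C0 with hCdef
  have hCpos : 0 < C := Real.exp_pos _
  have hC1 : 1 ≤ C := Real.one_le_exp hC0nn
  have hFb : ∀ s t : ℕ, tbar ≤ s → s ≤ t →
      (∏ u ∈ Finset.Ico s t, |k1 u|) ≤ C * Real.exp (a * ((t:ℝ) - s)) := by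
    intro s t hs hst
    have hpos : ∀ u ∈ Finset.Ico s t, 0 < |k1 u| := fun u hu =>
      abs_pos.mpr (hk1ne u (le_trans hs (Finset.mem_Ico.mp hu).1))
    have heq : (∏ u ∈ Finset.Ico s t, |k1 u|)
        = Real.exp (∑ u ∈ Finset.Ico s t, Real.log |k1 u|) := by
      rw [Real.exp_sum]
      exact Finset.prod_congr rfl fun u hu => (Real.exp_log (hpos u hu)).symm
    rw [heq]
    refine le_trans (Real.exp_le_exp.mpr (hkey s hs t hst)) (le_of_eq ?_)
    rw [Real.exp_add, hCdef]; ring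
  set D : ℝ := C * M * Real.exp (-a) with hDdef
  have hD0 : 0 ≤ D := by
    rw [hDdef]; positivity
  set p : ℕ := m - 1 with hpdef
  set K' : ℝ := (p.factorial : ℝ) * Real.exp δ / δ ^ p with hK'def
  have hK'0 : 0 ≤ K' := by
    rw [hK'def]; positivity
  have h1D : (1:ℝ) ≤ 1 + D := by linarith
  have hKnn : 0 ≤ C * (1 + D) ^ p * K' :=
    mul_nonneg (mul_nonneg hCpos.le (pow_nonneg (by linarith) p)) hK'0
  refine ⟨C * (1 + D) ^ p * K', hKnn, ?_⟩
  intro v hv t0 ht0 t ht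
  have hB : (0:ℝ) ≤ ‖v t0‖ := norm_nonneg _
  set g : Fin m → ℕ → ℝ := fun i s =>
    if (i : ℕ) = 0 then 0
    else k2 s * v s ⟨(i : ℕ) - 1, Nat.lt_of_le_of_lt (Nat.sub_le _ _) i.isLt⟩ with hgdef
  have hvg : ∀ s (i : Fin m), v (s + 1) i = k1 s * v s i + g i s := by
    simp only [hgdef]; exact hv
  have main : ∀ i : ℕ, ∀ hi : i < m, ∀ u, t0 ≤ u →
      |v u ⟨i, hi⟩| ≤ C * (1 + D) ^ i * (((u:ℝ) - t0) + 1) ^ i *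
        Real.exp (a * ((u:ℝ) - t0)) * ‖v t0‖ := by
    intro i
    induction i with
    | zero =>
      intro hi u htu
      have h0 := voc_aux k1 g v hvg t0 ⟨0, hi⟩ u htu
      have hz : ∀ s, g (⟨0, hi⟩ : Fin m) s = 0 := fun s => by simp [hgdef]
      simp only [hz, abs_zero, mul_zero, Finset.sum_const_zero, add_zero] at h0
      have h2 : |v t0 (⟨0, hi⟩ : Fin m)| ≤ ‖v t0‖ := by
        rw [← Real.norm_eq_abs]; exact norm_le_pi_norm _ _
      calc |v u (⟨0, hi⟩ : Fin m)|
          ≤ (∏ w ∈ Finset.Ico t0 u, |k1 w|) * |v t0 (⟨0, hi⟩ : Fin m)| := h0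
        _ ≤ (C * Real.exp (a * ((u:ℝ) - t0))) * ‖v t0‖ :=
            mul_le_mul (hFb t0 u ht0 htu) h2 (abs_nonneg _)
              (mul_nonneg hCpos.le (Real.exp_pos _).le)
        _ = C * (1 + D) ^ 0 * (((u:ℝ) - t0) + 1) ^ 0 *
            Real.exp (a * ((u:ℝ) - t0)) * ‖v t0‖ := by
            rw [pow_zero, pow_zero]; ring
    | succ i ih =>
      intro hi u htu
      have hi' : i < m := Nat.lt_of_succ_lt hi
      have h0 := voc_aux k1 g v hvg t0 ⟨i + 1, hi⟩ u htu
      have hgb : ∀ s, |g (⟨i + 1, hi⟩ : Fin m) s| ≤ M * |v s (⟨i, hi'⟩ : Fin m)| := by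
        intro s
        have h1 : g (⟨i + 1, hi⟩ : Fin m) s = k2 s * v s (⟨i, hi'⟩ : Fin m) := by
          simp [hgdef]
        rw [h1, abs_mul]
        exact mul_le_mul_of_nonneg_right (hMk2 s) (abs_nonneg _)
      have hunn : (0:ℝ) ≤ (u:ℝ) - t0 := by
        have : (t0:ℝ) ≤ u := by exact_mod_cast htu
        linarith
      have hfirst : (∏ w ∈ Finset.Ico t0 u, |k1 w|) * |v t0 (⟨i + 1, hi⟩ : Fin m)|
          ≤ C * Real.exp (a * ((u:ℝ) - t0)) * ‖v t0‖ := by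
        have h2 : |v t0 (⟨i + 1, hi⟩ : Fin m)| ≤ ‖v t0‖ := by
          rw [← Real.norm_eq_abs]; exact norm_le_pi_norm _ _
        exact mul_le_mul (hFb t0 u ht0 htu) h2 (abs_nonneg _)
          (mul_nonneg hCpos.le (Real.exp_pos _).le)
      have hsb : ∀ s ∈ Finset.Ico t0 u,
          (∏ w ∈ Finset.Ico (s + 1) u, |k1 w|) * |g (⟨i + 1, hi⟩ : Fin m) s|
          ≤ D * (C * (1 + D) ^ i * (((u:ℝ) - t0) + 1) ^ i) *
            Real.exp (a * ((u:ℝ) - t0)) * ‖v t0‖ := by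
        intro s hs
        obtain ⟨hs1, hs2⟩ := Finset.mem_Ico.mp hs
        have hsR0 : (t0:ℝ) ≤ (s:ℝ) := by exact_mod_cast hs1
        have hsR2 : (s:ℝ) < (u:ℝ) := by exact_mod_cast hs2
        have hF : (∏ w ∈ Finset.Ico (s + 1) u, |k1 w|)
            ≤ C * Real.exp (a * ((u:ℝ) - ((s:ℝ) + 1))) := by
          have := hFb (s + 1) u (le_trans ht0 (le_trans hs1 (Nat.le_succ s))) hs2
          push_cast at this
          exact this
        have hvi := ih hi' s hs1
        have hgs : |g (⟨i + 1, hi⟩ : Fin m) s|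
            ≤ M * (C * (1 + D) ^ i * (((s:ℝ) - t0) + 1) ^ i *
              Real.exp (a * ((s:ℝ) - t0)) * ‖v t0‖) :=
          le_trans (hgb s) (mul_le_mul_of_nonneg_left hvi hM0.le)
        have hexp : Real.exp (a * ((u:ℝ) - ((s:ℝ) + 1))) * Real.exp (a * ((s:ℝ) - t0))
            = Real.exp (-a) * Real.exp (a * ((u:ℝ) - t0)) := by
          rw [← Real.exp_add, ← Real.exp_add]; congr 1; ring
        have hPQ : ((((s:ℝ) - t0) + 1) ^ i) ≤ ((((u:ℝ) - t0) + 1) ^ i) :=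
          pow_le_pow_left₀ (by linarith) (by linarith) i
        have hxnn : 0 ≤ C * M * Real.exp (-a) * (C * (1 + D) ^ i) *
            Real.exp (a * ((u:ℝ) - t0)) * ‖v t0‖ := by
          have := pow_nonneg (le_trans zero_le_one h1D) i
          have h3 : 0 ≤ C * (1 + D) ^ i := mul_nonneg hCpos.le this
          have h4 : 0 ≤ C * M * Real.exp (-a) :=
            mul_nonneg (mul_nonneg hCpos.le hM0.le) (Real.exp_pos _).le
          exact mul_nonneg (mul_nonneg (mul_nonneg h4 h3) (Real.exp_pos _).le) hB
        calc (∏ w ∈ Finset.Ico (s + 1) u, |k1 w|) * |g (⟨i + 1, hi⟩ : Fin m) s|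
            ≤ (C * Real.exp (a * ((u:ℝ) - ((s:ℝ) + 1)))) *
              (M * (C * (1 + D) ^ i * (((s:ℝ) - t0) + 1) ^ i *
                Real.exp (a * ((s:ℝ) - t0)) * ‖v t0‖)) :=
              mul_le_mul hF hgs (abs_nonneg _)
                (mul_nonneg hCpos.le (Real.exp_pos _).le)
          _ = (C * M * (C * (1 + D) ^ i) * (((s:ℝ) - t0) + 1) ^ i * ‖v t0‖) *
              (Real.exp (a * ((u:ℝ) - ((s:ℝ) + 1))) * Real.exp (a * ((s:ℝ) - t0))) := by
              ring
          _ = (C * M * Real.exp (-a) * (C * (1 + D) ^ i) *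
                Real.exp (a * ((u:ℝ) - t0)) * ‖v t0‖) * (((s:ℝ) - t0) + 1) ^ i := by
              rw [hexp]; ring
          _ ≤ (C * M * Real.exp (-a) * (C * (1 + D) ^ i) *
                Real.exp (a * ((u:ℝ) - t0)) * ‖v t0‖) * (((u:ℝ) - t0) + 1) ^ i :=
              mul_le_mul_of_nonneg_left hPQ hxnn
          _ = D * (C * (1 + D) ^ i * (((u:ℝ) - t0) + 1) ^ i) *
                Real.exp (a * ((u:ℝ) - t0)) * ‖v t0‖ := by
              rw [hDdef]; ring
      have hsum2 : ∑ s ∈ Finset.Ico t0 u,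
          (∏ w ∈ Finset.Ico (s + 1) u, |k1 w|) * |g (⟨i + 1, hi⟩ : Fin m) s|
          ≤ ((u:ℝ) - t0) * (D * (C * (1 + D) ^ i * (((u:ℝ) - t0) + 1) ^ i) *
              Real.exp (a * ((u:ℝ) - t0)) * ‖v t0‖) := by
        have h5 := Finset.sum_le_card_nsmul (Finset.Ico t0 u) _ _ hsb
        rw [Nat.card_Ico, nsmul_eq_mul] at h5
        have hcast : ((u - t0 : ℕ) : ℝ) = (u:ℝ) - t0 := by
          rw [Nat.cast_sub htu]
        rw [hcast] at h5
        exact h5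
      have hfin := le_trans h0 (add_le_add hfirst hsum2)
      have hX : (1:ℝ) ≤ (1 + D) ^ i := one_le_pow₀ h1D
      have hY : (1:ℝ) ≤ (((u:ℝ) - t0) + 1) ^ i := by
        have hunn2 : (1:ℝ) ≤ ((u:ℝ) - t0) + 1 := by linarith
        exact one_le_pow₀ hunn2
      have hkey2 : C + ((u:ℝ) - t0) * (D * (C * (1 + D) ^ i * (((u:ℝ) - t0) + 1) ^ i))
          ≤ C * ((1 + D) ^ i * (1 + D)) * ((((u:ℝ) - t0) + 1) ^ i * (((u:ℝ) - t0) + 1)) := by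
        have hXY : (1:ℝ) ≤ (1 + D) ^ i * ((((u:ℝ) - t0) + 1) ^ i) := by
          calc (1:ℝ) = 1 * 1 := by ring
            _ ≤ (1 + D) ^ i * ((((u:ℝ) - t0) + 1) ^ i) :=
              mul_le_mul hX hY zero_le_one (le_trans zero_le_one hX)
        have hXYnn : (0:ℝ) ≤ (1 + D) ^ i * ((((u:ℝ) - t0) + 1) ^ i) :=
          le_trans zero_le_one hXY
        have h1 : C ≤ C * ((1 + D) ^ i * ((((u:ℝ) - t0) + 1) ^ i)) := by
          nlinarith [hCpos.le]
        have h2 : 0 ≤ C * ((1 + D) ^ i * ((((u:ℝ) - t0) + 1) ^ i)) * D :=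
          mul_nonneg (mul_nonneg hCpos.le hXYnn) hD0
        have h3 : 0 ≤ C * ((1 + D) ^ i * ((((u:ℝ) - t0) + 1) ^ i)) * ((u:ℝ) - t0) :=
          mul_nonneg (mul_nonneg hCpos.le hXYnn) hunn
        nlinarith [h1, h2, h3]
      calc |v u (⟨i + 1, hi⟩ : Fin m)|
          ≤ C * Real.exp (a * ((u:ℝ) - t0)) * ‖v t0‖ +
            ((u:ℝ) - t0) * (D * (C * (1 + D) ^ i * (((u:ℝ) - t0) + 1) ^ i) *
              Real.exp (a * ((u:ℝ) - t0)) * ‖v t0‖) := hfin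
        _ = (C + ((u:ℝ) - t0) * (D * (C * (1 + D) ^ i * (((u:ℝ) - t0) + 1) ^ i))) *
            (Real.exp (a * ((u:ℝ) - t0)) * ‖v t0‖) := by ring
        _ ≤ (C * ((1 + D) ^ i * (1 + D)) * ((((u:ℝ) - t0) + 1) ^ i * (((u:ℝ) - t0) + 1))) *
            (Real.exp (a * ((u:ℝ) - t0)) * ‖v t0‖) :=
            mul_le_mul_of_nonneg_right hkey2
              (mul_nonneg (Real.exp_pos _).le hB)
        _ = C * (1 + D) ^ (i + 1) * (((u:ℝ) - t0) + 1) ^ (i + 1) *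
            Real.exp (a * ((u:ℝ) - t0)) * ‖v t0‖ := by
            rw [pow_succ, pow_succ]; ring
  -- conclude
  have htR : (0:ℝ) ≤ (t:ℝ) - t0 := by
    have : (t0:ℝ) ≤ t := by exact_mod_cast ht
    linarith
  have hfinal : ∀ i : Fin m, |v t i| ≤
      (C * (1 + D) ^ p * K') * Real.exp ((η + ε) * ((t:ℝ) - (t0:ℝ))) * ‖v t0‖ := by
    intro i
    have h1 : |v t i| ≤ C * (1 + D) ^ (i:ℕ) * (((t:ℝ) - t0) + 1) ^ (i:ℕ) *
        Real.exp (a * ((t:ℝ) - t0)) * ‖v t0‖ := by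
      have := main i.val i.isLt t ht
      simpa using this
    have hip : (i:ℕ) ≤ p := by
      have := i.isLt; omega
    have h2a : (1 + D) ^ (i:ℕ) ≤ (1 + D) ^ p := pow_le_pow_right₀ h1D hip
    have h2b : (((t:ℝ) - t0) + 1) ^ (i:ℕ) ≤ (((t:ℝ) - t0) + 1) ^ p :=
      pow_le_pow_right₀ (by linarith) hip
    have h3 : (((t:ℝ) - t0) + 1) ^ p ≤ K' * Real.exp (δ * ((t:ℝ) - t0)) := by
      rw [hK'def]
      exact poly_le_exp p δ hδ0 _ htR
    have hEpos := (Real.exp_pos (a * ((t:ℝ) - t0))).le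
    have hexp2 : Real.exp (δ * ((t:ℝ) - t0)) * Real.exp (a * ((t:ℝ) - t0))
        = Real.exp ((η + ε) * ((t:ℝ) - t0)) := by
      rw [← Real.exp_add]; congr 1; rw [hadef, hδdef]; ring
    have hpow_nn : (0:ℝ) ≤ (1 + D) ^ p := pow_nonneg (by linarith) p
    have hpowi_nn : (0:ℝ) ≤ (((t:ℝ) - t0) + 1) ^ (i:ℕ) :=
      pow_nonneg (by linarith) _
    calc |v t i|
        ≤ C * (1 + D) ^ (i:ℕ) * (((t:ℝ) - t0) + 1) ^ (i:ℕ) *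
          Real.exp (a * ((t:ℝ) - t0)) * ‖v t0‖ := h1
      _ ≤ C * (1 + D) ^ p * (((t:ℝ) - t0) + 1) ^ p *
          Real.exp (a * ((t:ℝ) - t0)) * ‖v t0‖ := by
          have hmono : C * (1 + D) ^ (i:ℕ) * (((t:ℝ) - t0) + 1) ^ (i:ℕ)
              ≤ C * (1 + D) ^ p * (((t:ℝ) - t0) + 1) ^ p := by
            have := mul_le_mul (mul_le_mul_of_nonneg_left h2a hCpos.le) h2b
              hpowi_nn (mul_nonneg hCpos.le hpow_nn)
            linarith
          exact mul_le_mul_of_nonneg_right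
            (mul_le_mul_of_nonneg_right hmono hEpos) hB
      _ ≤ C * (1 + D) ^ p * (K' * Real.exp (δ * ((t:ℝ) - t0))) *
          Real.exp (a * ((t:ℝ) - t0)) * ‖v t0‖ := by
          have := mul_le_mul_of_nonneg_left h3 (mul_nonneg hCpos.le hpow_nn)
          exact mul_le_mul_of_nonneg_right
            (mul_le_mul_of_nonneg_right (by linarith) hEpos) hB
      _ = (C * (1 + D) ^ p * K') * Real.exp ((η + ε) * ((t:ℝ) - t0)) * ‖v t0‖ := by
          rw [← hexp2]; ring
  have hrnn : 0 ≤ (C * (1 + D) ^ p * K') * Real.exp ((η + ε) * ((t:ℝ) - (t0:ℝ))) * ‖v t0‖ :=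
    mul_nonneg (mul_nonneg hKnn (Real.exp_pos _).le) hB
  rw [pi_norm_le_iff_of_nonneg hrnn]
  intro i
  rw [Real.norm_eq_abs]
  exact hfinal i
end

section
/- Let Φ(t,t_0) = Π_{s=t_0}^{t-1} k_1(s) be the state transition function of the scalar equation v(t+1) = k_1(t) v(t), where k_1 is bounded, nonzero for t ≥ t̄, and η := limsup_{T→∞} (1/T) sup_{t_0 ≥ t̄} Σ_{s=t_0}^{t_0+T-1} log|k_1(s)| < 0. Then for every δ ∈ (0, -η) there is a constant C ≥ 1 (independent of t_0) such that |Φ(t,t_0)| ≤ C e^{(η+δ)(t-t_0)} for all t > t_0 ≥ t̄. -/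
/-- Uniform exponential estimate for the state transition function
`Φ(t,t₀) = ∏_{s=t₀}^{t-1} k₁(s)` of the scalar equation `v(t+1) = k₁(t) v(t)`:
if `k₁` is bounded, nonzero for `t ≥ t̄`, and the uniform averaged exponent
`η` is negative, then for every `δ ∈ (0, -η)` there is `C ≥ 1`, independent of
`t₀`, with `|Φ(t,t₀)| ≤ C e^{(η+δ)(t-t₀)}` for all `t > t₀ ≥ t̄`. -/
theorem transition_function_exponential_bound
    (k1 : ℕ → ℝ)
    (hk1bdd : ∃ M, ∀ t, |k1 t| ≤ M)
    (tbar : ℕ) (hk1ne : ∀ t, tbar ≤ t → k1 t ≠ 0)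
    (η : ℝ)
    (hη : η = Filter.limsup (fun T : ℕ =>
      (⨆ t0 : {t : ℕ // tbar ≤ t},
        ∑ s ∈ Finset.Ico (t0 : ℕ) ((t0 : ℕ) + T), Real.log |k1 s|) / T)
      Filter.atTop)
    (hηneg : η < 0) :
    ∀ δ ∈ Set.Ioo (0 : ℝ) (-η), ∃ C : ℝ, 1 ≤ C ∧
      ∀ t0, tbar ≤ t0 → ∀ t, t0 < t →
        |∏ s ∈ Finset.Ico t0 t, k1 s| ≤
          C * Real.exp ((η + δ) * ((t : ℝ) - (t0 : ℝ))) := by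
  obtain ⟨M, hM⟩ := hk1bdd
  set M' : ℝ := max M 1 with hM'def
  have hM'1 : (1:ℝ) ≤ M' := le_max_right _ _
  have hM'0 : (0:ℝ) < M' := lt_of_lt_of_le one_pos hM'1
  have hk1M' : ∀ s, |k1 s| ≤ M' := fun s => le_trans (hM s) (le_max_left _ _)
  have hlog : ∀ s, Real.log |k1 s| ≤ Real.log M' := by
    intro s
    rcases eq_or_lt_of_le (abs_nonneg (k1 s)) with h | h
    · rw [← h, Real.log_zero]; exact Real.log_nonneg hM'1
    · exact Real.log_le_log h (hk1M' s)
  intro δ hδ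
  obtain ⟨hδ0, hδη⟩ := hδ
  have hηδ : η + δ < 0 := by linarith
  have hsum_le : ∀ T t0 : ℕ,
      (∑ s ∈ Finset.Ico t0 (t0 + T), Real.log |k1 s|) ≤ T * Real.log M' := by
    intro T t0
    calc ∑ s ∈ Finset.Ico t0 (t0+T), Real.log |k1 s|
        ≤ ∑ _s ∈ Finset.Ico t0 (t0+T), Real.log M' :=
          Finset.sum_le_sum (fun s _ => hlog s)
      _ = T * Real.log M' := by
          rw [Finset.sum_const, Nat.card_Ico, Nat.add_sub_cancel_left, nsmul_eq_mul]
  have hbdd : ∀ T : ℕ, BddAbove (Set.range fun t0 : {t : ℕ // tbar ≤ t} =>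
      ∑ s ∈ Finset.Ico (t0:ℕ) ((t0:ℕ)+T), Real.log |k1 s|) := by
    intro T
    exact ⟨T * Real.log M', by rintro x ⟨t0, rfl⟩; exact hsum_le T t0⟩
  haveI : Nonempty {t : ℕ // tbar ≤ t} := ⟨⟨tbar, le_refl _⟩⟩
  have hfb : Filter.IsBoundedUnder (· ≤ ·) Filter.atTop (fun T : ℕ =>
      (⨆ t0 : {t : ℕ // tbar ≤ t},
        ∑ s ∈ Finset.Ico (t0:ℕ) ((t0:ℕ)+T), Real.log |k1 s|)/T) := by
    refine ⟨max (Real.log M') 0, Filter.eventually_map.2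
      (Filter.Eventually.of_forall fun T => ?_)⟩
    rcases Nat.eq_zero_or_pos T with h0 | hT
    · simp [h0]
    · have hTpos : (0:ℝ) < T := by exact_mod_cast hT
      have h1 : (⨆ t0 : {t : ℕ // tbar ≤ t},
          ∑ s ∈ Finset.Ico (t0:ℕ) ((t0:ℕ)+T), Real.log |k1 s|) ≤ T * Real.log M' :=
        ciSup_le fun t0 => hsum_le T t0
      have : (⨆ t0 : {t : ℕ // tbar ≤ t},
          ∑ s ∈ Finset.Ico (t0:ℕ) ((t0:ℕ)+T), Real.log |k1 s|)/T ≤ Real.log M' := by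
        rw [div_le_iff₀ hTpos]
        linarith [h1]
      exact le_trans this (le_max_left _ _)
  have hev : ∀ᶠ T : ℕ in Filter.atTop, (⨆ t0 : {t : ℕ // tbar ≤ t},
      ∑ s ∈ Finset.Ico (t0:ℕ) ((t0:ℕ)+T), Real.log |k1 s|)/T < η + δ := by
    apply Filter.eventually_lt_of_limsup_lt _ hfb
    rw [← hη]; linarith
  obtain ⟨T0, hT0⟩ := Filter.eventually_atTop.1 hev
  have hkey : ∀ t0 : ℕ, tbar ≤ t0 → ∀ T : ℕ, T0 ≤ T → 1 ≤ T →
      (∑ s ∈ Finset.Ico t0 (t0 + T), Real.log |k1 s|) ≤ (η + δ) * T := by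
    intro t0 ht0 T hT hT1
    have hTpos : (0:ℝ) < T := by exact_mod_cast hT1
    have h1 := hT0 T hT
    have h2 : (⨆ t0 : {t : ℕ // tbar ≤ t},
        ∑ s ∈ Finset.Ico (t0:ℕ) ((t0:ℕ)+T), Real.log |k1 s|) < (η + δ) * T := by
      rw [div_lt_iff₀ hTpos] at h1; exact h1
    exact le_of_lt (lt_of_le_of_lt (le_ciSup (hbdd T) ⟨t0, ht0⟩) h2)
  refine ⟨M'^T0 * Real.exp (-((η+δ) * T0)), ?_, ?_⟩
  · have h1 : (1:ℝ) ≤ M'^T0 := one_le_pow₀ hM'1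
    have h2 : (1:ℝ) ≤ Real.exp (-((η+δ) * T0)) := by
      rw [Real.one_le_exp_iff]
      have : (0:ℝ) ≤ (T0:ℝ) := Nat.cast_nonneg _
      nlinarith
    nlinarith
  · intro t0 ht0 t ht
    set n := t - t0 with hn
    have hn1 : 1 ≤ n := Nat.le_sub_of_add_le (by omega)
    have htn : t = t0 + n := by omega
    have hcast : (t:ℝ) - (t0:ℝ) = (n:ℝ) := by
      rw [hn, Nat.cast_sub ht.le]
    have habs : |∏ s ∈ Finset.Ico t0 t, k1 s| = ∏ s ∈ Finset.Ico t0 t, |k1 s| :=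
      Finset.abs_prod _ _
    have hprod : |∏ s ∈ Finset.Ico t0 t, k1 s| =
        Real.exp (∑ s ∈ Finset.Ico t0 t, Real.log |k1 s|) := by
      rw [habs, Real.exp_sum]
      refine Finset.prod_congr rfl fun s hs => ?_
      have hs' : tbar ≤ s := le_trans ht0 (Finset.mem_Ico.1 hs).1
      rw [Real.exp_log (abs_pos.2 (hk1ne s hs'))]
    rw [hprod, hcast]
    by_cases hcase : T0 ≤ n
    · have h1 : (∑ s ∈ Finset.Ico t0 t, Real.log |k1 s|) ≤ (η + δ) * n := by
        rw [htn]; exact hkey t0 ht0 n hcase hn1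
      calc Real.exp (∑ s ∈ Finset.Ico t0 t, Real.log |k1 s|)
          ≤ Real.exp ((η + δ) * n) := Real.exp_le_exp.2 h1
        _ ≤ M'^T0 * Real.exp (-((η+δ) * T0)) * Real.exp ((η + δ) * n) := by
            have h2 : (1:ℝ) ≤ M'^T0 := one_le_pow₀ hM'1
            have h3 : (1:ℝ) ≤ Real.exp (-((η+δ) * T0)) := by
              rw [Real.one_le_exp_iff]
              have : (0:ℝ) ≤ (T0:ℝ) := Nat.cast_nonneg _
              nlinarith
            exact le_mul_of_one_le_left (Real.exp_pos _).le (by nlinarith)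
    · push_neg at hcase
      have h1 : Real.exp (∑ s ∈ Finset.Ico t0 t, Real.log |k1 s|) ≤ M'^T0 := by
        rw [← hprod, habs]
        calc ∏ s ∈ Finset.Ico t0 t, |k1 s| ≤ ∏ _s ∈ Finset.Ico t0 t, M' :=
            Finset.prod_le_prod (fun s _ => abs_nonneg _) (fun s _ => hk1M' s)
          _ = M'^n := by rw [Finset.prod_const, Nat.card_Ico]
          _ ≤ M'^T0 := pow_le_pow_right₀ hM'1 hcase.le
      have h2 : M'^T0 ≤ M'^T0 * Real.exp (-((η+δ) * T0)) * Real.exp ((η + δ) * n) := by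
        rw [mul_assoc, ← Real.exp_add]
        have h3 : (0:ℝ) ≤ -((η+δ) * T0) + (η + δ) * n := by
          have hnT : (n:ℝ) ≤ T0 := by exact_mod_cast hcase.le
          nlinarith
        have := Real.one_le_exp_iff.2 h3
        nlinarith [pow_pos hM'0 T0]
      linarith
end

section
/- For μ > 0 and Θ < 0, the Schwarzian derivative of f_μ(x) = Θ[a x + 1 - 2/(1 + e^{-μx})], a = (1-e^{-μ})/(1+e^{-μ}), at any point x ∈ [0,1] where f_μ'(x) ≠ 0, equals Sf_μ(x) = (-2aμ³ e^{-μx}/b²)·g_μ(x), where b = a(1+e^{-μx})² - 2μ e^{-μx} and g_μ(x) = 1 + e^{-2μx} + (μ/a - 4) e^{-μx}. -/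
lemma sd_aux1 (μ Θ a : ℝ) (x : ℝ) :
    HasDerivAt (fun x => Θ * (a * x + 1 - 2 / (1 + Real.exp (-μ * x))))
      (Θ * (a - 2 * μ * Real.exp (-μ * x) / (1 + Real.exp (-μ * x)) ^ 2)) x := by
  have hDpos : (0:ℝ) < 1 + Real.exp (-μ * x) := by positivity
  have hE : HasDerivAt (fun x => Real.exp (-μ * x)) (Real.exp (-μ * x) * (-μ)) x := by
    simpa using (((hasDerivAt_id x).const_mul (-μ)).exp)
  have hD : HasDerivAt (fun x => 1 + Real.exp (-μ * x)) (Real.exp (-μ * x) * (-μ)) x :=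
    hE.const_add 1
  have h := ((((hasDerivAt_id x).const_mul a).add_const 1).sub
    ((hasDerivAt_const x (2:ℝ)).div hD hDpos.ne')).const_mul Θ
  refine h.congr_deriv ?_
  ring

lemma sd_aux2 (μ Θ a : ℝ) (x : ℝ) :
    HasDerivAt (fun x => Θ * (a - 2 * μ * Real.exp (-μ * x) / (1 + Real.exp (-μ * x)) ^ 2))
      (-2 * μ ^ 2 * Θ * Real.exp (-μ * x) * (Real.exp (-μ * x) - 1)
        / (1 + Real.exp (-μ * x)) ^ 3) x := by
  have hDpos : (0:ℝ) < 1 + Real.exp (-μ * x) := by positivity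
  have hE : HasDerivAt (fun x => Real.exp (-μ * x)) (Real.exp (-μ * x) * (-μ)) x := by
    simpa using (((hasDerivAt_id x).const_mul (-μ)).exp)
  have hD : HasDerivAt (fun x => 1 + Real.exp (-μ * x)) (Real.exp (-μ * x) * (-μ)) x :=
    hE.const_add 1
  have h := ((hasDerivAt_const x a).sub
    ((hE.const_mul (2*μ)).div (hD.pow 2) (pow_ne_zero 2 hDpos.ne'))).const_mul Θ
  refine h.congr_deriv ?_
  simp only [Pi.pow_apply, Pi.mul_apply]
  field_simp
  ring

lemma sd_aux3 (μ Θ a : ℝ) (x : ℝ) :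
    HasDerivAt (fun x => -2 * μ ^ 2 * Θ * Real.exp (-μ * x) * (Real.exp (-μ * x) - 1)
        / (1 + Real.exp (-μ * x)) ^ 3)
      (-2 * μ ^ 3 * Θ * Real.exp (-μ * x) *
        (Real.exp (-μ * x) ^ 2 - 4 * Real.exp (-μ * x) + 1)
        / (1 + Real.exp (-μ * x)) ^ 4) x := by
  have hDpos : (0:ℝ) < 1 + Real.exp (-μ * x) := by positivity
  have hE : HasDerivAt (fun x => Real.exp (-μ * x)) (Real.exp (-μ * x) * (-μ)) x := by
    simpa using (((hasDerivAt_id x).const_mul (-μ)).exp)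
  have hD : HasDerivAt (fun x => 1 + Real.exp (-μ * x)) (Real.exp (-μ * x) * (-μ)) x :=
    hE.const_add 1
  have h := ((hE.const_mul (-2*μ^2*Θ)).mul (hE.sub_const 1)).div (hD.pow 3) (pow_ne_zero 3 hDpos.ne')
  refine h.congr_deriv ?_
  simp only [Pi.pow_apply, Pi.mul_apply]
  field_simp
  ring

/-- Closed form of the Schwarzian derivative of
`f_μ(x) = Θ [a x + 1 - 2/(1 + e^{-μx})]` with `a = (1-e^{-μ})/(1+e^{-μ})`:
at every `x ∈ [0,1]` with `f_μ'(x) ≠ 0`,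
`Sf_μ(x) = (-2aμ³ e^{-μx}/b²) · g_μ(x)` with
`b = a(1+e^{-μx})² - 2μ e^{-μx}` and `g_μ(x) = 1 + e^{-2μx} + (μ/a - 4) e^{-μx}`. -/
theorem schwarzian_derivative_closed_form
    (μ Θ a : ℝ) (hμ : 0 < μ) (hΘ : Θ < 0)
    (ha : a = (1 - Real.exp (-μ)) / (1 + Real.exp (-μ)))
    (f : ℝ → ℝ)
    (hf : ∀ x, f x = Θ * (a * x + 1 - 2 / (1 + Real.exp (-μ * x)))) :
    ∀ x ∈ Set.Icc (0 : ℝ) 1, deriv f x ≠ 0 →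
      deriv (deriv (deriv f)) x / deriv f x
        - (3 / 2) * (deriv (deriv f) x / deriv f x) ^ 2 =
      (-2 * a * μ ^ 3 * Real.exp (-μ * x) /
          (a * (1 + Real.exp (-μ * x)) ^ 2 - 2 * μ * Real.exp (-μ * x)) ^ 2) *
        (1 + Real.exp (-2 * μ * x) + (μ / a - 4) * Real.exp (-μ * x)) := by
  have hfe : f = fun x => Θ * (a * x + 1 - 2 / (1 + Real.exp (-μ * x))) := funext hf
  subst hfe
  have h1 : deriv (fun x => Θ * (a * x + 1 - 2 / (1 + Real.exp (-μ * x))))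
      = fun x => Θ * (a - 2 * μ * Real.exp (-μ * x) / (1 + Real.exp (-μ * x)) ^ 2) :=
    funext fun x => (sd_aux1 μ Θ a x).deriv
  rw [h1]
  have h2 : deriv (fun x => Θ * (a - 2 * μ * Real.exp (-μ * x) / (1 + Real.exp (-μ * x)) ^ 2))
      = fun x => -2 * μ ^ 2 * Θ * Real.exp (-μ * x) * (Real.exp (-μ * x) - 1)
        / (1 + Real.exp (-μ * x)) ^ 3 :=
    funext fun x => (sd_aux2 μ Θ a x).deriv
  rw [h2]
  have h3 : deriv (fun x => -2 * μ ^ 2 * Θ * Real.exp (-μ * x) * (Real.exp (-μ * x) - 1)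
        / (1 + Real.exp (-μ * x)) ^ 3)
      = fun x => -2 * μ ^ 3 * Θ * Real.exp (-μ * x) *
        (Real.exp (-μ * x) ^ 2 - 4 * Real.exp (-μ * x) + 1)
        / (1 + Real.exp (-μ * x)) ^ 4 :=
    funext fun x => (sd_aux3 μ Θ a x).deriv
  rw [h3]
  intro x _ hfx
  simp only at hfx ⊢
  set E := Real.exp (-μ * x) with hE
  have hEpos : 0 < E := Real.exp_pos _
  have hDpos : (0:ℝ) < 1 + E := by positivity
  have hΘ0 : Θ ≠ 0 := ne_of_lt hΘ
  have ha0 : 0 < a := by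
    rw [ha]
    have h1 : Real.exp (-μ) < 1 := Real.exp_lt_one_iff.2 (by linarith)
    have h2 : (0:ℝ) < 1 + Real.exp (-μ) := by positivity
    exact div_pos (by linarith) h2
  have hE2 : Real.exp (-2 * μ * x) = E ^ 2 := by
    rw [hE, sq, ← Real.exp_add]; ring_nf
  rw [hE2]
  have h4 : a - 2 * μ * E / (1 + E) ^ 2 ≠ 0 := by
    intro h
    exact hfx (by rw [h, mul_zero])
  have hb : a * (1 + E) ^ 2 - 2 * μ * E ≠ 0 := by
    intro h
    apply h4
    have : a * (1 + E) ^ 2 = 2 * μ * E := by linarith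
    field_simp [this]
    linarith
  field_simp
  ring
end

section
/- For μ > 0, let a = (1 - e^{-μ})/(1 + e^{-μ}) and g_μ(x) = 1 + e^{-2μx} + (μ/a - 4)e^{-μx}. Then g_μ(x) > 0 for all x ∈ [0,1]. Consequently, the Schwarzian derivative of f_μ (Θ < 0) is negative wherever f_μ' ≠ 0. -/
open Real

private lemma psi_pos {μ : ℝ} (hμ : 0 < μ) : 0 < Real.exp (-μ) * (μ + 2) + μ - 2 := by
  set ψ : ℝ → ℝ := fun t => Real.exp (-t) * (t + 2) + t - 2 with hψ
  have hder : ∀ t : ℝ, HasDerivAt ψ (1 - (t + 1) * Real.exp (-t)) t := by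
    intro t
    have hE : HasDerivAt (fun t : ℝ => Real.exp (-t)) (Real.exp (-t) * (-1)) t := by
      simpa using (((hasDerivAt_id t).const_mul (-1:ℝ)).exp)
    have h1 : HasDerivAt (fun t : ℝ => t + 2) 1 t := (hasDerivAt_id t).add_const 2
    have := ((hE.fun_mul h1).fun_add (hasDerivAt_id t)).sub_const 2
    refine this.congr_deriv ?_
    ring
  have hmono : StrictMonoOn ψ (Set.Ici 0) := by
    apply strictMonoOn_of_deriv_pos (convex_Ici 0)
    · exact (Continuous.continuousOn (by fun_prop))
    · intro t ht
      rw [interior_Ici] at ht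
      rw [(hder t).deriv]
      have h1 : t + 1 < Real.exp t := by
        have := Real.add_one_lt_exp (x := t) (ne_of_gt ht)
        linarith
      have h2 : (t + 1) * Real.exp (-t) < Real.exp t * Real.exp (-t) :=
        mul_lt_mul_of_pos_right h1 (Real.exp_pos _)
      rw [← Real.exp_add] at h2
      simp at h2
      linarith
  have := hmono (Set.self_mem_Ici) (Set.mem_Ici.mpr hμ.le) hμ
  simp [hψ] at this
  linarith

private lemma expE (μ : ℝ) (x : ℝ) :
    HasDerivAt (fun x => Real.exp (-μ * x)) (Real.exp (-μ * x) * (-μ)) x := by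
  simpa using (((hasDerivAt_id x).const_mul (-μ)).exp)

private lemma Dpos (μ x : ℝ) : 0 < 1 + Real.exp (-μ * x) := by positivity

private lemma d1 (μ a Θ : ℝ) (x : ℝ) :
    HasDerivAt (fun x => Θ * (a * x + 1 - 2 / (1 + Real.exp (-μ * x))))
      (Θ * (a - 2 * μ * Real.exp (-μ * x) / (1 + Real.exp (-μ * x)) ^ 2)) x := by
  have hD : (1 + Real.exp (-μ * x)) ≠ 0 := (Dpos μ x).ne'
  have hc : HasDerivAt (fun x => 1 + Real.exp (-μ * x)) (Real.exp (-μ * x) * (-μ)) x :=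
    (expE μ x).const_add 1
  have h2 : HasDerivAt (fun x => (2:ℝ) / (1 + Real.exp (-μ * x)))
      ((0 * (1 + Real.exp (-μ * x)) - 2 * (Real.exp (-μ * x) * (-μ))) /
        (1 + Real.exp (-μ * x)) ^ 2) x :=
    (hasDerivAt_const x (2:ℝ)).div hc hD
  have hlin : HasDerivAt (fun x : ℝ => a * x + 1) a x := by
    simpa using ((hasDerivAt_id x).const_mul a).add_const 1
  have h := (hlin.fun_sub h2).const_mul Θ
  refine h.congr_deriv ?_
  field_simp
  ring

private lemma d2 (μ a Θ : ℝ) (x : ℝ) :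
    HasDerivAt (fun x => Θ * (a - 2 * μ * Real.exp (-μ * x) / (1 + Real.exp (-μ * x)) ^ 2))
      (Θ * (2 * μ ^ 2 * Real.exp (-μ * x) * (1 - Real.exp (-μ * x)) /
        (1 + Real.exp (-μ * x)) ^ 3)) x := by
  have hD : (1 + Real.exp (-μ * x)) ≠ 0 := (Dpos μ x).ne'
  have hD2 : ((1 + Real.exp (-μ * x)) ^ 2) ≠ 0 := pow_ne_zero _ hD
  have hc : HasDerivAt (fun x => 1 + Real.exp (-μ * x)) (Real.exp (-μ * x) * (-μ)) x :=
    (expE μ x).const_add 1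
  have hc2 : HasDerivAt (fun x => (1 + Real.exp (-μ * x)) ^ 2)
      (2 * (1 + Real.exp (-μ * x)) ^ 1 * (Real.exp (-μ * x) * (-μ))) x := by
    simpa using hc.fun_pow 2
  have hnum : HasDerivAt (fun x => 2 * μ * Real.exp (-μ * x))
      (2 * μ * (Real.exp (-μ * x) * (-μ))) x := (expE μ x).const_mul (2 * μ)
  have hq := hnum.fun_div hc2 hD2
  have h := ((hasDerivAt_const x a).fun_sub hq).const_mul Θ
  refine h.congr_deriv ?_
  field_simp
  ring

private lemma d3 (μ a Θ : ℝ) (x : ℝ) :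
    HasDerivAt (fun x => Θ * (2 * μ ^ 2 * Real.exp (-μ * x) * (1 - Real.exp (-μ * x)) /
        (1 + Real.exp (-μ * x)) ^ 3))
      (Θ * (-2 * μ ^ 3 * Real.exp (-μ * x) *
        (1 - 4 * Real.exp (-μ * x) + Real.exp (-μ * x) ^ 2) /
        (1 + Real.exp (-μ * x)) ^ 4)) x := by
  have hD : (1 + Real.exp (-μ * x)) ≠ 0 := (Dpos μ x).ne'
  have hD3 : ((1 + Real.exp (-μ * x)) ^ 3) ≠ 0 := pow_ne_zero _ hD
  have hc : HasDerivAt (fun x => 1 + Real.exp (-μ * x)) (Real.exp (-μ * x) * (-μ)) x :=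
    (expE μ x).const_add 1
  have hc3 : HasDerivAt (fun x => (1 + Real.exp (-μ * x)) ^ 3)
      (3 * (1 + Real.exp (-μ * x)) ^ 2 * (Real.exp (-μ * x) * (-μ))) x := by
    simpa using hc.fun_pow 3
  have hE := expE μ x
  have hnum : HasDerivAt
      (fun x => 2 * μ ^ 2 * Real.exp (-μ * x) * (1 - Real.exp (-μ * x)))
      (2 * μ ^ 2 * (Real.exp (-μ * x) * (-μ)) * (1 - Real.exp (-μ * x)) +
        2 * μ ^ 2 * Real.exp (-μ * x) * (0 - Real.exp (-μ * x) * (-μ))) x :=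
    (hE.const_mul (2 * μ ^ 2)).fun_mul ((hasDerivAt_const x 1).fun_sub hE)
  have hq := hnum.fun_div hc3 hD3
  have h := hq.const_mul Θ
  refine h.congr_deriv ?_
  field_simp
  ring

/-- For `μ > 0` and `a = (1-e^{-μ})/(1+e^{-μ})`, the auxiliary function
`g_μ(x) = 1 + e^{-2μx} + (μ/a - 4) e^{-μx}` is positive on `[0,1]`.
Consequently, for `Θ < 0` the Schwarzian derivative of
`f_μ(x) = Θ [a x + 1 - 2/(1 + e^{-μx})]` is negative at every `x ∈ [0,1]`
where `f_μ'(x) ≠ 0`. -/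
theorem g_positive_and_schwarzian_negative
    (μ Θ a : ℝ) (hμ : 0 < μ) (hΘ : Θ < 0)
    (ha : a = (1 - Real.exp (-μ)) / (1 + Real.exp (-μ)))
    (f : ℝ → ℝ)
    (hf : ∀ x, f x = Θ * (a * x + 1 - 2 / (1 + Real.exp (-μ * x)))) :
    ∀ x ∈ Set.Icc (0 : ℝ) 1,
      0 < 1 + Real.exp (-2 * μ * x) + (μ / a - 4) * Real.exp (-μ * x) ∧
      (deriv f x ≠ 0 →
        deriv (deriv (deriv f)) x / deriv f x
          - (3 / 2) * (deriv (deriv f) x / deriv f x) ^ 2 < 0) := by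
  have ht0 : (0:ℝ) < Real.exp (-μ) := Real.exp_pos _
  have ht1 : Real.exp (-μ) < 1 := Real.exp_lt_one_iff.mpr (by linarith)
  have htd : (0:ℝ) < 1 + Real.exp (-μ) := by linarith
  have ha0 : 0 < a := by rw [ha]; exact div_pos (by linarith) htd
  have hmu2a : 2 * a < μ := by
    have hψ := psi_pos hμ
    rw [ha, mul_comm, div_mul_eq_mul_div, div_lt_iff₀ htd]
    nlinarith
  intro x hx
  -- g positivity
  have hE0 : (0:ℝ) < Real.exp (-μ * x) := Real.exp_pos _
  have hE2 : Real.exp (-2 * μ * x) = Real.exp (-μ * x) ^ 2 := by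
    rw [← Real.exp_nat_mul]; ring_nf
  have hg : 0 < 1 + Real.exp (-2 * μ * x) + (μ / a - 4) * Real.exp (-μ * x) := by
    rw [hE2]
    set E := Real.exp (-μ * x) with hEdef
    have key : a * (1 + E ^ 2 + (μ / a - 4) * E)
        = a * (1 - E) ^ 2 + (μ - 2 * a) * E := by
      field_simp
      ring
    have h1 : 0 < a * (1 + E ^ 2 + (μ / a - 4) * E) := by
      rw [key]
      have := mul_pos (by linarith : (0:ℝ) < μ - 2 * a) hE0
      nlinarith [sq_nonneg (1 - E)]
    nlinarith
  refine ⟨hg, fun hne => ?_⟩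
  -- derivatives
  have hfun : f = fun x => Θ * (a * x + 1 - 2 / (1 + Real.exp (-μ * x))) := funext hf
  have hd1 : deriv f = fun x =>
      Θ * (a - 2 * μ * Real.exp (-μ * x) / (1 + Real.exp (-μ * x)) ^ 2) := by
    rw [hfun]; exact funext fun x => (d1 μ a Θ x).deriv
  have hd2 : deriv (deriv f) = fun x =>
      Θ * (2 * μ ^ 2 * Real.exp (-μ * x) * (1 - Real.exp (-μ * x)) /
        (1 + Real.exp (-μ * x)) ^ 3) := by
    rw [hd1]; exact funext fun x => (d2 μ a Θ x).deriv
  have hd3 : deriv (deriv (deriv f)) = fun x =>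
      Θ * (-2 * μ ^ 3 * Real.exp (-μ * x) *
        (1 - 4 * Real.exp (-μ * x) + Real.exp (-μ * x) ^ 2) /
        (1 + Real.exp (-μ * x)) ^ 4) := by
    rw [hd2]; exact funext fun x => (d3 μ a Θ x).deriv
  rw [hd3, hd2, hd1]
  beta_reduce
  set E := Real.exp (-μ * x) with hEdef
  have hDpos : (0:ℝ) < 1 + E := Dpos μ x
  have hDne : (1 + E) ≠ 0 := hDpos.ne'
  have hΘne : Θ ≠ 0 := hΘ.ne
  -- P ≠ 0
  have hP : a * (1 + E) ^ 2 - 2 * μ * E ≠ 0 := by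
    intro h
    apply hne
    rw [hd1]
    beta_reduce
    have : a - 2 * μ * E / (1 + E) ^ 2 = (a * (1 + E) ^ 2 - 2 * μ * E) / (1 + E) ^ 2 := by
      field_simp
    rw [this, h, zero_div, mul_zero]
  have hF1ne : a - 2 * μ * E / (1 + E) ^ 2 ≠ 0 := by
    intro h
    apply hP
    field_simp at h
    linarith
  have key : Θ * (-2 * μ ^ 3 * E * (1 - 4 * E + E ^ 2) / (1 + E) ^ 4) /
        (Θ * (a - 2 * μ * E / (1 + E) ^ 2))
      - 3 / 2 * (Θ * (2 * μ ^ 2 * E * (1 - E) / (1 + E) ^ 3) /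
        (Θ * (a - 2 * μ * E / (1 + E) ^ 2))) ^ 2
      = -(2 * μ ^ 3 * E * a * (1 + E ^ 2 + (μ / a - 4) * E)) /
          (a * (1 + E) ^ 2 - 2 * μ * E) ^ 2 := by
    field_simp
    ring
  rw [key]
  apply div_neg_of_neg_of_pos
  · have hgE : 0 < 1 + E ^ 2 + (μ / a - 4) * E := by rw [← hE2] at *; exact hE2 ▸ hg
    have : 0 < 2 * μ ^ 3 * E * a * (1 + E ^ 2 + (μ / a - 4) * E) := by
      apply mul_pos (by positivity) hgE
    linarith
  · exact pow_two_pos_of_ne_zero hP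
end

section
/- Let f be differentiable along a bounded synchronous trajectory s(t) with Lyapunov exponent μ_f := limsup_{T→∞} (1/T) Σ_{t=t̄}^{t̄+T-1} log|f'(s(t))| > 0, and consider diffusive coupling g with g(x,x) = 0. If the multiplicity of the eigenvalue 0 of the graph Laplacian L is at least 2 (in particular, if the graph has at least two quasi-isolated vertices or does not possess a spanning tree), then the maximal mixed transverse exponent χ^diff = max_{k≥2} χ_k^diff is positive, where χ_k^diff = limsup_{T→∞} (1/T) Σ log|f'(s(t)) + ε ∂₂g(s(t),s(t))(λ_k - 1)| and λ_k are eigenvalues of K = I - L. -/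
open Filter

/-- If `f` has positive Lyapunov exponent `μ_f` along a synchronous trajectory
`s(t)`, the coupling `g` is diffusive (`g(x,x) = 0`), and the eigenvalue `1`
of the coupling matrix `K` has multiplicity at least `2` (equivalently, `0` is
an eigenvalue of `L = I - K` with multiplicity at least `2`, e.g. when there
are two quasi-isolated vertices or no spanning tree exists), then the maximal
mixed transverse exponent `χ^diff = max_{k≥2} χ_k^diff` is positive, where
`χ_k^diff = limsup (1/T) ∑ log|f'(s(t)) + ε ∂₂g(s(t),s(t)) (λ_k - 1)|`. -/
theorem chaotic_units_no_sync_positive_transverse_exponent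
    (n : ℕ) [NeZero n] (hn : 2 ≤ n)
    (f : ℝ → ℝ) (g : ℝ → ℝ → ℝ) (ε : ℝ)
    (hdiffusive : ∀ x : ℝ, g x x = 0)
    (s : ℕ → ℝ) (tbar : ℕ)
    (hfne : ∀ t, tbar ≤ t → deriv f (s t) ≠ 0)
    (μf : ℝ)
    (hμf : μf = limsup (fun T : ℕ =>
      (∑ t ∈ Finset.Ico tbar (tbar + T), Real.log |deriv f (s t)|) / T) atTop)
    (hμfpos : 0 < μf)
    (lam : Fin n → ℂ) (hlam0 : lam 0 = 1)
    (hmult : ∃ k : Fin n, k ≠ 0 ∧ lam k = 1)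
    (χ : Fin n → ℝ)
    (hχ : ∀ k, χ k = limsup (fun T : ℕ =>
      (∑ t ∈ Finset.Ico tbar (tbar + T),
        Real.log (Norm.norm (((deriv f (s t) : ℝ) : ℂ) +
          (ε : ℂ) * ((deriv (fun y => g (s t) y) (s t) : ℝ) : ℂ) *
            (lam k - 1)))) / T) atTop)
    (hne : (Finset.univ.erase (0 : Fin n)).Nonempty) :
    0 < (Finset.univ.erase (0 : Fin n)).sup' hne χ := by
  obtain ⟨k, hk0, hk1⟩ := hmult
  have hχk : χ k = μf := by
    rw [hχ k, hμf]
    congr 1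
    funext T
    congr 1
    apply Finset.sum_congr rfl
    intro t _
    rw [hk1]
    simp [Complex.norm_real]
  calc 0 < μf := hμfpos
    _ = χ k := hχk.symm
    _ ≤ _ := Finset.le_sup' χ (Finset.mem_erase.mpr ⟨hk0, Finset.mem_univ k⟩)
end
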